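/- For every integer d ≥ 2, every even integer k ≥ 6, and all constants c_1, c_2, c_3 > 0, there exists a constant C > 0 such that for every power q of an odd prime, every (c_1,c_2,c_3)-regular set V ⊆ F_q^d, and every E ⊆ V with |E| > q^{(d−1)/2}, one has Λ_k(E) ≤ C ( q^{(d−1)(k−4)/2} Λ_4(E) + q^{−1} |E|^{k−1} ). -/

import Mathlib

open Finset

/-- `‖x‖ = x₁² + ⋯ + x_d²` for `x ∈ 𝔽_q^d`. -/
def normF {F : Type*} [Field F] {d : ℕ} (x : Fin d → F) : F := ∑ i, x i ^ 2

/-- The `k`-resultant set `Δ_k(E) = {‖x¹ - x² - ⋯ - x^k‖ : xⁱ ∈ E}` (for `k ≥ 2`):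
`y` plays the role of `x¹` and `x 0, …, x (k-2)` play the roles of `x², …, x^k`. -/
def Delta {F : Type*} [Field F] {d : ℕ} (k : ℕ) (E : Set (Fin d → F)) : Set F :=
  {t | ∃ (y : Fin d → F) (x : Fin (k - 1) → Fin d → F),
    y ∈ E ∧ (∀ i, x i ∈ E) ∧ normF (y - ∑ i, x i) = t}

/-- The `2m`-energy `Λ_{2m}(E)`: the number of `2m`-tuples of points of `E`
whose first `m` entries and last `m` entries have equal sums. -/
noncomputable def energy {F : Type*} [Field F] {d : ℕ} (m : ℕ) (E : Set (Fin d → F)) : ℕ :=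
  Nat.card {p : (Fin m → Fin d → F) × (Fin m → Fin d → F) //
    (∀ i, p.1 i ∈ E) ∧ (∀ i, p.2 i ∈ E) ∧ (∑ i, p.1 i) = ∑ i, p.2 i}

/-- The (normalized) Fourier transform of the indicator function of `E ⊆ 𝔽_q^d`,
with respect to the additive character `χ`. -/
noncomputable def ftF {F : Type*} [Field F] [Fintype F] {d : ℕ} (χ : AddChar F ℂ)
    (E : Set (Fin d → F)) (m : Fin d → F) : ℂ :=
  ((Fintype.card F : ℂ) ^ d)⁻¹ *
    ∑ x : Fin d → F, Set.indicator E (fun y => χ (-(∑ i, m i * y i))) x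

/-- `V ⊆ 𝔽_q^d` is `(c₁,c₂,c₃)`-regular (with respect to the character `χ`). -/
def IsRegularVariety {F : Type*} [Field F] [Fintype F] {d : ℕ} (c1 c2 c3 : ℝ) (χ : AddChar F ℂ)
    (V : Set (Fin d → F)) : Prop :=
  c1 * (Fintype.card F : ℝ) ^ (d - 1) ≤ (Nat.card V : ℝ) ∧
  (Nat.card V : ℝ) ≤ c2 * (Fintype.card F : ℝ) ^ (d - 1) ∧
  ∀ m : Fin d → F, m ≠ 0 →
    ‖ftF χ V m‖ ≤ c3 * (Fintype.card F : ℝ) ^ (-(((d : ℝ) + 1) / 2))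

/-- `V ⊆ 𝔽_q²` is a `(c₁,c₂,c₃)`-nondegenerate regular curve defined by a nonzero
polynomial of total degree at most `n` (with respect to the character `χ`). -/
def IsNondegCurve {F : Type*} [Field F] [Fintype F] (c1 c2 c3 : ℝ) (χ : AddChar F ℂ)
    (n : ℕ) (V : Set (Fin 2 → F)) : Prop :=
  (∃ Q : MvPolynomial (Fin 2) F, Q ≠ 0 ∧ Q.totalDegree ≤ n ∧
      (¬∃ A B : MvPolynomial (Fin 2) F, A.totalDegree = 1 ∧ Q = A * B) ∧
      V = {x | MvPolynomial.eval x Q = 0}) ∧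
  c1 * (Fintype.card F : ℝ) ≤ (Nat.card V : ℝ) ∧
  (Nat.card V : ℝ) ≤ c2 * (Fintype.card F : ℝ) ∧
  ∀ m : Fin 2 → F, m ≠ 0 →
    ‖ftF χ V m‖ ≤ c3 * (Fintype.card F : ℝ) ^ (-(3 / 2) : ℝ)

/-!
Write `S_A(ξ) = ∑_{x ∈ A} χ(ξ·x) = q^d · conj Â(ξ)`. Orthogonality of characters gives
`∑_ξ |S_E(ξ)|^{2m} = q^d Λ_{2m}(E)`. Enlarging the range of one summand from `E` to `V ⊇ E`
bounds `q^d Λ_{2m+2}(E)` by `∑_ξ |S_V(ξ)| |S_E(ξ)|^{2m+1}`; the term `ξ = 0` is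
`|V| |E|^{2m+1}`, and for `ξ ≠ 0` regularity gives `|S_V(ξ)| ≤ c₃ q^{(d-1)/2}`, after which
Cauchy–Schwarz yields `Λ_{2m+2} ≤ 2c₂ |E|^{2m+1}/q + c₃² q^{d-1} Λ_{2m}`. Iterating down to `Λ₄`,
with `q^{d-1} ≤ |E|²` absorbing the error terms, gives the theorem.
-/

open Matrix

lemma AddChar.map_sum_eq_prod {A M ι : Type*} [AddCommMonoid A] [CommMonoid M]
    (ψ : AddChar A M) (s : Finset ι) (f : ι → A) :
    ψ (∑ i ∈ s, f i) = ∏ i ∈ s, ψ (f i) := by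
  induction s using Finset.cons_induction with
  | empty => simp
  | cons a s ha ih => rw [sum_cons, prod_cons, AddChar.map_add_eq_mul, ih]

lemma le_two_mul_add_of_le_add_of_sq_le {a b s D : ℝ} (hb : 0 ≤ b) (hD : 0 ≤ D)
    (h : a ≤ b + s) (hs : s ^ 2 ≤ D * a) : a ≤ 2 * b + D := by
  -- `s ≤ (D + a) / 2` by AM–GM, as `s² ≤ D a`
  by_contra! ha
  nlinarith [sq_nonneg (a - D)]

lemma le_pow_mul_of_le_add_mul {x y : ℕ → ℝ} {A B Q : ℝ} (hA : 0 ≤ A) (hB : 0 ≤ B)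
    (hQ : 0 ≤ Q) (hx₀ : 0 ≤ x 0) (hy : ∀ j, 0 ≤ y j) (hyQ : ∀ j, Q * y j ≤ y (j + 1))
    (hx : ∀ j, x (j + 1) ≤ B * y (j + 1) + A * Q * x j) (j : ℕ) :
    x j ≤ (A + B + 1) ^ j * (Q ^ j * x 0 + y j) := by
  induction j with
  | zero => simp [hy 0]
  | succ j ih =>
    set K := (A + B + 1) ^ j
    have hK : 1 ≤ K := one_le_pow₀ (by linarith)
    have hK₀ : 0 ≤ K := zero_le_one.trans hK
    have hQZ : 0 ≤ Q * (Q ^ j * x 0) := by positivity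
    calc x (j + 1) ≤ B * y (j + 1) + A * Q * (K * (Q ^ j * x 0 + y j)) := by grw [hx j, ih]
      _ ≤ (A + B + 1) * K * (Q * (Q ^ j * x 0) + y (j + 1)) := by
        nlinarith [mul_le_mul_of_nonneg_left (hyQ j) (mul_nonneg hA hK₀),
          mul_nonneg hB (mul_nonneg (sub_nonneg.2 hK) (hy (j + 1))),
          mul_nonneg (add_nonneg hB zero_le_one) (mul_nonneg hK₀ hQZ),
          mul_nonneg hK₀ (hy (j + 1))]
      _ = _ := by rw [pow_succ', pow_succ']; ring

lemma rpow_sub_one_div_two_sq {x : ℝ} (hx : 0 ≤ x) {d : ℕ} (hd : 1 ≤ d) :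
    (x ^ (((d : ℝ) - 1) / 2)) ^ 2 = x ^ (d - 1) := by
  rw [← Real.rpow_mul_natCast hx, ← Real.rpow_natCast, Nat.cast_sub hd]
  norm_num

section Fourier

variable {F : Type*} [Field F] {χ : AddChar F ℂ} {ι : Type*} [Fintype ι]

lemma sum_addChar_dotProduct [Fintype F] [DecidableEq F] [DecidableEq ι] (hχ : χ ≠ 1)
    (a : ι → F) :
    ∑ ξ : ι → F, χ (ξ ⬝ᵥ a) =
      if a = 0 then (Fintype.card F : ℂ) ^ Fintype.card ι else 0 := by
  simp_rw [dotProduct, AddChar.map_sum_eq_prod]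
  rw [← Fintype.prod_sum fun i t => χ (t * a i)]
  simp_rw [AddChar.sum_mulShift _ (AddChar.IsPrimitive.of_ne_one hχ), Nat.cast_ite,
    Nat.cast_zero, Fintype.prod_ite_zero, prod_const, card_univ, funext_iff, Pi.zero_apply]

variable (χ) in
def expSum (A : Finset (ι → F)) (ξ : ι → F) : ℂ := ∑ x ∈ A, χ (ξ ⬝ᵥ x)

lemma expSum_zero (A : Finset (ι → F)) : expSum χ A 0 = A.card := by
  simp [expSum]

lemma prod_expSum {n : ℕ} (A : Fin n → Finset (ι → F)) (ξ : ι → F) :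
    ∏ i, expSum χ (A i) ξ = ∑ x ∈ Fintype.piFinset A, χ (ξ ⬝ᵥ ∑ i, x i) := by
  simp_rw [expSum, prod_univ_sum, dotProduct_sum, AddChar.map_sum_eq_prod]

def sumEqCount [DecidableEq F] {n : ℕ} (A B : Fin n → Finset (ι → F)) : ℕ :=
  #{p ∈ Fintype.piFinset A ×ˢ Fintype.piFinset B | ∑ i, p.1 i = ∑ i, p.2 i}

lemma sumEqCount_mono [DecidableEq F] {n : ℕ} {A A' B B' : Fin n → Finset (ι → F)}
    (hA : ∀ i, A i ⊆ A' i) (hB : ∀ i, B i ⊆ B' i) : sumEqCount A B ≤ sumEqCount A' B' :=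
  card_le_card <| filter_subset_filter _ <| product_subset_product
    (Fintype.piFinset_subset _ _ hA) (Fintype.piFinset_subset _ _ hB)

lemma sum_prod_expSum_mul_conj [Fintype F] [DecidableEq F] [DecidableEq ι] (hχ : χ ≠ 1)
    {n : ℕ} (A B : Fin n → Finset (ι → F)) :
    ∑ ξ : ι → F, (∏ i, expSum χ (A i) ξ) * starRingEnd ℂ (∏ i, expSum χ (B i) ξ) =
      (Fintype.card F : ℂ) ^ Fintype.card ι * sumEqCount A B := by
  simp_rw [prod_expSum, map_sum, ← AddChar.map_neg_eq_conj, sum_mul_sum,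
    ← AddChar.map_add_eq_mul, ← sub_eq_add_neg, ← dotProduct_sub]
  rw [sum_comm]
  simp_rw [sum_comm (γ := ι → F), sum_addChar_dotProduct hχ, sub_eq_zero, ← sum_product',
    sum_ite, sum_const_zero, add_zero, sum_const, sumEqCount, nsmul_eq_mul, mul_comm]

end Fourier

section Energy

variable {F : Type*} [Field F] [Fintype F] {χ : AddChar F ℂ} {d : ℕ}

lemma energy_eq_sumEqCount [DecidableEq F] (m : ℕ) (E : Set (Fin d → F)) [Fintype E] :
    energy m E = sumEqCount (fun _ : Fin m => E.toFinset) (fun _ => E.toFinset) := by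
  classical
  rw [energy, sumEqCount, Nat.card_eq_fintype_card, Fintype.card_subtype]
  congr 1
  ext p
  simp [Fintype.mem_piFinset, and_assoc]

lemma sum_norm_expSum_pow [DecidableEq F] (hχ : χ ≠ 1) (m : ℕ) (E : Set (Fin d → F))
    [Fintype E] :
    ∑ ξ : Fin d → F, ‖expSum χ E.toFinset ξ‖ ^ (2 * m) =
      (Fintype.card F : ℝ) ^ d * energy m E := by
  have h := sum_prod_expSum_mul_conj hχ (fun _ : Fin m => E.toFinset) (fun _ => E.toFinset)
  simp_rw [prod_const, card_univ, Fintype.card_fin, map_pow, ← mul_pow, Complex.mul_conj,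
    Complex.normSq_eq_norm_sq, ← energy_eq_sumEqCount] at h
  simp_rw [pow_mul]
  exact_mod_cast h

lemma norm_expSum_toFinset (E : Set (Fin d → F)) [Fintype E] (ξ : Fin d → F) :
    ‖expSum χ E.toFinset ξ‖ = (Fintype.card F : ℝ) ^ d * ‖ftF χ E ξ‖ := by
  have hconj : ftF χ E ξ =
      ((Fintype.card F : ℂ) ^ d)⁻¹ * starRingEnd ℂ (expSum χ E.toFinset ξ) := by
    rw [ftF, expSum, map_sum, ← sum_indicator_subset _ (subset_univ E.toFinset),
      Set.coe_toFinset]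
    simp_rw [← AddChar.map_neg_eq_conj, dotProduct]
  rw [hconj, norm_mul, norm_inv, Complex.norm_conj, norm_pow, Complex.norm_natCast,
    mul_inv_cancel_left₀ (by positivity)]

end Energy

section Step

variable {F : Type*} [Field F] [Fintype F] [DecidableEq F] {χ : AddChar F ℂ} {d : ℕ}

lemma mul_energy_succ_le (hχ : χ ≠ 1) {E V : Set (Fin d → F)} [Fintype E] [Fintype V]
    (hEV : E ⊆ V) (m : ℕ) :
    (Fintype.card F : ℝ) ^ d * energy (m + 1) E ≤
      ∑ ξ, ‖expSum χ V.toFinset ξ‖ * ‖expSum χ E.toFinset ξ‖ ^ (2 * m + 1) := by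
  let A : Fin (m + 1) → Finset (Fin d → F) := Fin.cons V.toFinset fun _ => E.toFinset
  have hcount : energy (m + 1) E ≤ sumEqCount A fun _ => E.toFinset := by
    rw [energy_eq_sumEqCount]
    refine sumEqCount_mono (fun i => ?_) fun _ => subset_rfl
    cases i using Fin.cases with
    | zero => simpa [A] using hEV
    | succ i => simp [A]
  calc (Fintype.card F : ℝ) ^ d * energy (m + 1) E
      ≤ (Fintype.card F : ℝ) ^ d * sumEqCount A fun _ => E.toFinset := by gcongr
    _ = ‖∑ ξ, (∏ i, expSum χ (A i) ξ) *
          starRingEnd ℂ (∏ _i : Fin (m + 1), expSum χ E.toFinset ξ)‖ := by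
      rw [sum_prod_expSum_mul_conj hχ]
      norm_cast
      simp only [Fintype.card_fin]
    _ ≤ _ := norm_sum_le _ _
    _ = _ := by
      simp only [A, Fin.prod_univ_succ, Fin.cons_zero, Fin.cons_succ, prod_const, card_univ,
        Fintype.card_fin, map_pow, norm_mul, norm_pow, RCLike.norm_conj]
      exact sum_congr rfl fun ξ _ => by ring

lemma sq_sum_norm_expSum_pow_le (hχ : χ ≠ 1) (E : Set (Fin d → F)) [Fintype E]
    (s : Finset (Fin d → F)) (m : ℕ) :
    (∑ ξ ∈ s, ‖expSum χ E.toFinset ξ‖ ^ (2 * m + 1)) ^ 2 ≤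
      ((Fintype.card F : ℝ) ^ d * energy m E) *
        ((Fintype.card F : ℝ) ^ d * energy (m + 1) E) := by
  calc (∑ ξ ∈ s, ‖expSum χ E.toFinset ξ‖ ^ (2 * m + 1)) ^ 2
      ≤ (∑ ξ ∈ s, ‖expSum χ E.toFinset ξ‖ ^ (2 * m)) *
          ∑ ξ ∈ s, ‖expSum χ E.toFinset ξ‖ ^ (2 * (m + 1)) := by
        rw [show 2 * m + 1 = m + (m + 1) by ring, mul_comm 2 m, mul_comm 2 (m + 1)]
        simpa only [pow_add, pow_mul] using sum_mul_sq_le_sq_mul_sq s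
          (fun ξ => ‖expSum χ E.toFinset ξ‖ ^ m) (fun ξ => ‖expSum χ E.toFinset ξ‖ ^ (m + 1))
    _ ≤ (∑ ξ, ‖expSum χ E.toFinset ξ‖ ^ (2 * m)) *
          ∑ ξ, ‖expSum χ E.toFinset ξ‖ ^ (2 * (m + 1)) := by
      gcongr <;> exact subset_univ s
    _ = _ := by rw [sum_norm_expSum_pow hχ, sum_norm_expSum_pow hχ]

lemma energy_succ_le_of_norm_expSum_le (hχ : χ ≠ 1) {E V : Set (Fin d → F)} [Fintype E]
    [Fintype V] (hEV : E ⊆ V) {M : ℝ} (hM : ∀ ξ ≠ 0, ‖expSum χ V.toFinset ξ‖ ≤ M) (m : ℕ) :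
    (energy (m + 1) E : ℝ) ≤
      2 * Nat.card V * Nat.card E ^ (2 * m + 1) / (Fintype.card F : ℝ) ^ d +
        M ^ 2 * energy m E := by
  set qd := (Fintype.card F : ℝ) ^ d
  have hqd : 0 < qd := by positivity
  set S := ∑ ξ ∈ univ.erase 0, ‖expSum χ E.toFinset ξ‖ ^ (2 * m + 1)
  have hsplit : qd * energy (m + 1) E ≤ Nat.card V * Nat.card E ^ (2 * m + 1) + M * S := by
    calc qd * energy (m + 1) E
        ≤ ∑ ξ, ‖expSum χ V.toFinset ξ‖ * ‖expSum χ E.toFinset ξ‖ ^ (2 * m + 1) :=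
          mul_energy_succ_le hχ hEV m
      _ = ‖expSum χ V.toFinset 0‖ * ‖expSum χ E.toFinset 0‖ ^ (2 * m + 1) + ∑ ξ ∈ univ.erase 0,
            ‖expSum χ V.toFinset ξ‖ * ‖expSum χ E.toFinset ξ‖ ^ (2 * m + 1) :=
          (add_sum_erase _ _ (mem_univ 0)).symm
      _ ≤ Nat.card V * Nat.card E ^ (2 * m + 1) +
            ∑ ξ ∈ univ.erase 0, M * ‖expSum χ E.toFinset ξ‖ ^ (2 * m + 1) := by
          simp only [expSum_zero, Complex.norm_natCast, Nat.card_eq_card_toFinset]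
          gcongr with ξ hξ
          exact hM ξ (ne_of_mem_erase hξ)
      _ = _ := by rw [mul_sum]
  refine (le_two_mul_add_of_le_add_of_sq_le (b := Nat.card V * Nat.card E ^ (2 * m + 1) / qd)
    (s := M * S / qd) (D := M ^ 2 * energy m E) (by positivity) (by positivity) ?_ ?_).trans_eq
    (by ring)
  · rw [← add_div, le_div_iff₀ hqd]
    linarith
  · have hS := sq_sum_norm_expSum_pow_le hχ E (univ.erase 0) m
    rw [div_pow, mul_pow, div_le_iff₀ (by positivity)]
    calc M ^ 2 * S ^ 2 ≤ M ^ 2 * ((qd * energy m E) * (qd * energy (m + 1) E)) := by gcongr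
      _ = _ := by ring

end Step

section Regular

variable {F : Type*} [Field F] [Fintype F] {χ : AddChar F ℂ} {d : ℕ} {c1 c2 c3 : ℝ}
  {V : Set (Fin d → F)}

lemma IsRegularVariety.norm_expSum_le (hV : IsRegularVariety c1 c2 c3 χ V) [Fintype V]
    {ξ : Fin d → F} (hξ : ξ ≠ 0) :
    ‖expSum χ V.toFinset ξ‖ ≤ c3 * (Fintype.card F : ℝ) ^ (((d : ℝ) - 1) / 2) := by
  have hq : (0 : ℝ) < Fintype.card F := by positivity
  calc ‖expSum χ V.toFinset ξ‖ = (Fintype.card F : ℝ) ^ d * ‖ftF χ V ξ‖ :=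
        norm_expSum_toFinset V ξ
    _ ≤ (Fintype.card F : ℝ) ^ d * (c3 * (Fintype.card F : ℝ) ^ (-(((d : ℝ) + 1) / 2))) := by
      gcongr; exact hV.2.2 ξ hξ
    _ = _ := by
      rw [mul_left_comm, ← Real.rpow_natCast, ← Real.rpow_add hq]
      ring_nf

lemma IsRegularVariety.energy_succ_le (hχ : χ ≠ 1)
    (hV : IsRegularVariety c1 c2 c3 χ V) {E : Set (Fin d → F)} (hEV : E ⊆ V) (hd : 1 ≤ d)
    (m : ℕ) :
    (energy (m + 1) E : ℝ) ≤ 2 * c2 * Nat.card E ^ (2 * m + 1) / Fintype.card F +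
      c3 ^ 2 * (Fintype.card F : ℝ) ^ (d - 1) * energy m E := by
  classical
  have hq : (0 : ℝ) < Fintype.card F := by positivity
  have h := energy_succ_le_of_norm_expSum_le hχ hEV (fun ξ hξ => hV.norm_expSum_le hξ) m
  rw [mul_pow, rpow_sub_one_div_two_sq hq.le hd] at h
  refine h.trans (add_le_add_left ?_ _)
  calc 2 * Nat.card V * Nat.card E ^ (2 * m + 1) / (Fintype.card F : ℝ) ^ d
      ≤ 2 * (c2 * (Fintype.card F : ℝ) ^ (d - 1)) * Nat.card E ^ (2 * m + 1) /
          (Fintype.card F : ℝ) ^ d := by gcongr; exact hV.2.1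
    _ = _ := by
      rw [← pow_sub_one_mul (by omega : d ≠ 0)]
      field_simp

end Regular

theorem stmt_15_general (d k : ℕ) (hd : 2 ≤ d) (hk : 6 ≤ k) (hke : Even k)
    (c1 c2 c3 : ℝ) (hc2 : 0 < c2) :
    ∃ C : ℝ, 0 < C ∧
      ∀ (F : Type) [Field F] [Fintype F], Odd (Fintype.card F) →
        ∀ χ : AddChar F ℂ, χ ≠ 1 →
          ∀ V : Set (Fin d → F), IsRegularVariety c1 c2 c3 χ V →
            ∀ E : Set (Fin d → F), E ⊆ V →
              (Fintype.card F : ℝ) ^ (((d : ℝ) - 1) / 2) < (Nat.card E : ℝ) →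
              (energy (k / 2) E : ℝ) ≤
                C * ((Fintype.card F : ℝ) ^ ((d - 1) * (k - 4) / 2) * (energy 2 E : ℝ) +
                  (Nat.card E : ℝ) ^ (k - 1) / (Fintype.card F : ℝ)) := by
  obtain ⟨j, rfl⟩ : ∃ j, k = 2 * j + 4 := by obtain ⟨r, rfl⟩ := hke; exact ⟨r - 2, by omega⟩
  refine ⟨(c3 ^ 2 + 2 * c2 + 1) ^ j, by positivity, ?_⟩
  intro F _ _ _ χ hχ V hV E hEV hE
  have hq : (0 : ℝ) ≤ Fintype.card F := by positivity
  have hEsq : (Fintype.card F : ℝ) ^ (d - 1) ≤ Nat.card E ^ 2 := by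
    rw [← rpow_sub_one_div_two_sq hq (by omega)]
    gcongr
  have key := le_pow_mul_of_le_add_mul (x := fun j => (energy (j + 2) E : ℝ))
    (y := fun j => (Nat.card E : ℝ) ^ (2 * j + 3) / Fintype.card F) (A := c3 ^ 2) (B := 2 * c2)
    (Q := (Fintype.card F : ℝ) ^ (d - 1)) (sq_nonneg c3)
    (by positivity) (by positivity) (by positivity) (fun _ => by positivity)
    (fun j => by
      rw [mul_div_assoc', show 2 * (j + 1) + 3 = 2 * j + 3 + 2 by ring, pow_add _ (2 * j + 3) 2,
        mul_comm ((Nat.card E : ℝ) ^ (2 * j + 3))]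
      gcongr)
    (fun j => (hV.energy_succ_le hχ hEV (by omega) (j + 2)).trans_eq (by ring_nf)) j
  have hexp : (d - 1) * (2 * j + 4 - 4) / 2 = (d - 1) * j := by
    rw [Nat.add_sub_cancel, mul_left_comm, Nat.mul_div_cancel_left _ two_pos]
  rw [show (2 * j + 4) / 2 = j + 2 by omega, hexp, show 2 * j + 4 - 1 = 2 * j + 3 by omega]
  simpa only [← pow_mul] using key

/-- for `d ≥ 2`, even `k ≥ 6` and `c₁, c₂, c₃ > 0` there is `C > 0` such that
for every odd prime power `q`, every `(c₁,c₂,c₃)`-regular `V ⊆ 𝔽_q^d` and every `E ⊆ V` with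
`|E| > q^{(d-1)/2}`, one has `Λ_k(E) ≤ C (q^{(d-1)(k-4)/2} Λ_4(E) + q^{-1} |E|^{k-1})`. -/
theorem stmt_15 (d k : ℕ) (hd : 2 ≤ d) (hk : 6 ≤ k) (hke : Even k)
    (c1 c2 c3 : ℝ) (hc1 : 0 < c1) (hc2 : 0 < c2) (hc3 : 0 < c3) :
    ∃ C : ℝ, 0 < C ∧
      ∀ (F : Type) [Field F] [Fintype F], Odd (Fintype.card F) →
        ∀ χ : AddChar F ℂ, χ ≠ 1 →
          ∀ V : Set (Fin d → F), IsRegularVariety c1 c2 c3 χ V →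
            ∀ E : Set (Fin d → F), E ⊆ V →
              (Fintype.card F : ℝ) ^ (((d : ℝ) - 1) / 2) < (Nat.card E : ℝ) →
              (energy (k / 2) E : ℝ) ≤
                C * ((Fintype.card F : ℝ) ^ ((d - 1) * (k - 4) / 2) * (energy 2 E : ℝ) +
                  (Nat.card E : ℝ) ^ (k - 1) / (Fintype.card F : ℝ)) :=
  stmt_15_general d k hd hk hke c1 c2 c3 hc2
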